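/- arXiv:2401.10346 — 2 statements merged into one kernel-verified Lean document; each statement's English description precedes it below -/
import Mathlib

section
/- Let X₀ be an n1×n2 matrix (n2 ≥ n1) of rank r. (i) If Φ: ℝ^{n1×n2} → ℝ^m is a linear operator such that X₀ is the unique optimal solution of min ‖X‖_* subject to ΦX = ΦX₀, then m ≥ r(r+1)/2. (ii) There exists a linear operator Φ: ℝ^{n1×n2} → ℝ^{r(r+1)/2} such that X₀ is the unique optimal solution of min ‖X‖_* subject to ΦX = ΦX₀. -/
open Matrix Filter Set

/-- The singular values of a rectangular real matrix, in decreasing order: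
the square roots of the eigenvalues of `X Xᵀ`, sorted decreasingly. -/
noncomputable def svals {a b : ℕ} (X : Matrix (Fin a) (Fin b) ℝ) : Fin a → ℝ :=
  fun i =>
    Real.sqrt ((Matrix.isHermitian_mul_conjTranspose_self X).eigenvalues
      (Tuple.sort (Matrix.isHermitian_mul_conjTranspose_self X).eigenvalues i.rev))

/-- The nuclear norm `‖X‖_* = Σᵢ σᵢ(X)`. -/
noncomputable def nuclearNorm {a b : ℕ} (X : Matrix (Fin a) (Fin b) ℝ) : ℝ :=
  ∑ i, svals X i

/-- The spectral norm `‖X‖ = σ₁(X)`. -/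
noncomputable def matSpectralNorm {a b : ℕ} (X : Matrix (Fin a) (Fin b) ℝ) : ℝ :=
  ⨆ i, svals X i

/-- The Frobenius (trace) inner product `⟨A, B⟩ = Tr(Aᵀ B)`. -/
noncomputable def finner {a b : ℕ} (A B : Matrix (Fin a) (Fin b) ℝ) : ℝ :=
  Matrix.trace (Aᵀ * B)

/-- The Frobenius norm. -/
noncomputable def frobNorm {a b : ℕ} (A : Matrix (Fin a) (Fin b) ℝ) : ℝ :=
  Real.sqrt (finner A A)

/-- The subdifferential of the nuclear norm at `X`. -/
def nsubdiff {a b : ℕ} (X : Matrix (Fin a) (Fin b) ℝ) : Set (Matrix (Fin a) (Fin b) ℝ) :=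
  {Y | ∀ Z, finner Y (Z - X) ≤ nuclearNorm Z - nuclearNorm X}

/-- `∂g*(Y) = {X : Y ∈ ∂‖X‖_*}`, the subdifferential of the conjugate of the nuclear norm. -/
def invSubdiff {a b : ℕ} (Y : Matrix (Fin a) (Fin b) ℝ) : Set (Matrix (Fin a) (Fin b) ℝ) :=
  {X | Y ∈ nsubdiff X}

/-- `O(X)`: the set of orthogonal pairs `(U, V)` such that `X = U (Diag σ(X)) Vᵀ`
is a full ordered SVD of `X`. -/
def svdPairs {a b : ℕ} (X : Matrix (Fin a) (Fin b) ℝ) :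
    Set (Matrix (Fin a) (Fin a) ℝ × Matrix (Fin b) (Fin b) ℝ) :=
  {UV | UV.1ᵀ * UV.1 = 1 ∧ UV.2ᵀ * UV.2 = 1 ∧
    X = UV.1 * (Matrix.of fun (i : Fin a) (j : Fin b) =>
      if (i : ℕ) = (j : ℕ) then svals X i else 0) * UV.2ᵀ}

/-- `p(Y) = #{i : σᵢ(Y) = 1}`. -/
noncomputable def pOne {a b : ℕ} (Y : Matrix (Fin a) (Fin b) ℝ) : ℕ :=
  Nat.card {i : Fin a // svals Y i = 1}

/-- The radial cone `R_Ω(x) = ℝ₊ (Ω − x)` of a set `Ω` at a point `x`. -/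
def radialCone {M : Type*} [AddCommGroup M] [Module ℝ M] (Ω : Set M) (x : M) : Set M :=
  {w | ∃ t : ℝ, 0 ≤ t ∧ ∃ z ∈ Ω, w = t • (z - x)}

/-- The `n1 × n2` block matrix `[A, D, 0; Dᵀ, C, 0; 0, 0, 0]`, where `A` occupies the
top-left `r × r` block, `D` the adjacent `r × (p − r)` block, `C` the next
`(p − r) × (p − r)` diagonal block, with zeros elsewhere. -/
def blockRect (n1 n2 r p : ℕ) (A : Matrix (Fin r) (Fin r) ℝ)
    (D : Matrix (Fin r) (Fin (p - r)) ℝ) (C : Matrix (Fin (p - r)) (Fin (p - r)) ℝ) :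
    Matrix (Fin n1) (Fin n2) ℝ :=
  Matrix.of fun i j =>
    if hi : (i : ℕ) < r then
      if hj : (j : ℕ) < r then A ⟨i, hi⟩ ⟨j, hj⟩
      else if hj2 : (j : ℕ) < p then D ⟨i, hi⟩ ⟨(j : ℕ) - r, by omega⟩
      else 0
    else if hi2 : (i : ℕ) < p then
      if hj : (j : ℕ) < r then D ⟨j, hj⟩ ⟨(i : ℕ) - r, by omega⟩
      else if hj2 : (j : ℕ) < p then C ⟨(i : ℕ) - r, by omega⟩ ⟨(j : ℕ) - r, by omega⟩
      else 0
    else 0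

/-!
Write `J` for `rectId` and take an SVD `X₀ = U (D J) Vᵀ` with `D = diag d`, `d ≥ 0`, so that `r` is
the number of nonzero `dᵢ`. Since `X ↦ U X Vᵀ` preserves the nuclear norm, it suffices to treat
`X₀ = D J`.

(i) If `S` is symmetric and supported on the support of `d`, then `D + tS` is positive semidefinite
for small `t > 0`, so `‖(D + tS) J‖_* = tr D + t tr S`. Uniqueness of the minimiser therefore gives
`tr S > 0` whenever `Φ (S J) = 0` and `S ≠ 0`; applied to `±S` this shows that `S ↦ Φ (S J)` is
injective on a space of dimension `r(r+1)/2`.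

(ii) Measure the symmetric part of the `r × r` block of `X` on the support of `d`. For the partial
isometry `E` onto that block, `⟨E, X⟩ ≤ ‖X‖_*` for every `X` (Cauchy–Schwarz, column by column of
an SVD of `X`), while the measurements force `⟨E, X⟩ = tr D = ‖X₀‖_*`. In the equality case
`X = M J` with `M` symmetric and supported on the block, and then the measurements force `M = D`.
-/

open Polynomial in
theorem nuclearNorm_eq_sum_sqrt_roots {a b : ℕ} (X : Matrix (Fin a) (Fin b) ℝ) :
    nuclearNorm X = ((X * Xᵀ).charpoly.roots.map Real.sqrt).sum := by
  have hX := isHermitian_mul_conjTranspose_self X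
  rw [← conjTranspose_eq_transpose_of_trivial, hX.roots_charpoly_eq_eigenvalues, Multiset.map_map,
    ← Finset.sum_eq_multiset_sum, nuclearNorm]
  exact Equiv.sum_comp (Fin.revPerm.trans (Tuple.sort hX.eigenvalues))
    (fun i => Real.sqrt (hX.eigenvalues i))

theorem nuclearNorm_mul_mul_transpose {a b : ℕ} {U : Matrix (Fin a) (Fin a) ℝ}
    {V : Matrix (Fin b) (Fin b) ℝ} (hU : Uᵀ * U = 1) (hV : Vᵀ * V = 1)
    (X : Matrix (Fin a) (Fin b) ℝ) : nuclearNorm (U * X * Vᵀ) = nuclearNorm X := by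
  have hgram : U * X * Vᵀ * (U * X * Vᵀ)ᵀ = U * (X * Xᵀ * Uᵀ) := by
    simp only [transpose_mul, transpose_transpose, Matrix.mul_assoc]
    rw [← Matrix.mul_assoc Vᵀ, hV, Matrix.one_mul]
  rw [nuclearNorm_eq_sum_sqrt_roots, nuclearNorm_eq_sum_sqrt_roots, hgram, charpoly_mul_comm,
    Matrix.mul_assoc, hU, Matrix.mul_one]

def rectId (a b : ℕ) : Matrix (Fin a) (Fin b) ℝ :=
  Matrix.of fun i j => if (i : ℕ) = j then 1 else 0

theorem rectId_mul_transpose {a b : ℕ} (hab : a ≤ b) : rectId a b * (rectId a b)ᵀ = 1 := by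
  ext i j
  rw [mul_apply, Finset.sum_eq_single (Fin.castLE hab i)] <;>
    simp +contextual [rectId, one_apply, Fin.ext_iff, eq_comm]

theorem nuclearNorm_mul_rectId {a b : ℕ} (hab : a ≤ b) {M : Matrix (Fin a) (Fin a) ℝ}
    (hM : M.PosSemidef) : nuclearNorm (M * rectId a b) = M.trace := by
  have hgram : M * rectId a b * (M * rectId a b)ᵀ = cfc (· ^ 2 : ℝ → ℝ) M := by
    rw [cfc_pow_id M 2 hM.isHermitian.isSelfAdjoint, transpose_mul, Matrix.mul_assoc,
      ← Matrix.mul_assoc (rectId a b), rectId_mul_transpose hab, Matrix.one_mul,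
      ← conjTranspose_eq_transpose_of_trivial, hM.isHermitian.eq, sq]
  rw [nuclearNorm_eq_sum_sqrt_roots, hgram, hM.isHermitian.charpoly_cfc_eq, Polynomial.roots_prod]
  · simp only [Polynomial.roots_X_sub_C, Multiset.bind_singleton, Multiset.map_map,
      Function.comp_def, RCLike.ofReal_real_eq_id, id]
    rw [← Finset.sum_eq_multiset_sum, hM.isHermitian.trace_eq_sum_eigenvalues]
    exact Finset.sum_congr rfl fun i _ => Real.sqrt_sq (hM.eigenvalues_nonneg i)
  · exact Finset.prod_ne_zero_iff.mpr fun i _ => Polynomial.X_sub_C_ne_zero _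

theorem Matrix.IsHermitian.exists_orthogonal_isDiag {n : ℕ} {A : Matrix (Fin n) (Fin n) ℝ}
    (hA : A.IsHermitian) : ∃ U : Matrix (Fin n) (Fin n) ℝ, Uᵀ * U = 1 ∧ (Uᵀ * A * U).IsDiag := by
  set U := (hA.eigenvectorUnitary : Matrix (Fin n) (Fin n) ℝ)
  have hU : Uᵀ * U = 1 := (mem_orthogonalGroup_iff' _ ℝ).mp hA.eigenvectorUnitary.2
  refine ⟨U, hU, ?_⟩
  have hA' := hA.spectral_theorem
  rw [Unitary.conjStarAlgAut_apply, star_eq_conjTranspose, conjTranspose_eq_transpose_of_trivial]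
    at hA'
  rw [hA', ← Matrix.mul_assoc, ← Matrix.mul_assoc, hU, Matrix.one_mul, Matrix.mul_assoc, hU,
    Matrix.mul_one]
  exact isDiag_diagonal _

theorem exists_orthonormalBasis_castLE {a b : ℕ} (hab : a ≤ b)
    {y : Fin a → EuclideanSpace ℝ (Fin b)} (hy : Pairwise fun i j => inner ℝ (y i) (y j) = 0) :
    ∃ B : OrthonormalBasis (Fin b) ℝ (EuclideanSpace ℝ (Fin b)),
      ∀ i, y i ≠ 0 → B (Fin.castLE hab i) = ‖y i‖⁻¹ • y i := by
  set ι := Fin.castLE hab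
  let u : Fin a → EuclideanSpace ℝ (Fin b) := fun i => ‖y i‖⁻¹ • y i
  let S : Set (Fin a) := {i | y i ≠ 0}
  have hu : Orthonormal ℝ (S.domRestrict u) := by
    refine ⟨fun i => norm_smul_inv_norm i.2, fun i j hij => ?_⟩
    simp [Set.domRestrict_apply, u, inner_smul_left, inner_smul_right,
      hy (Subtype.coe_ne_coe.mpr hij)]
  let e := Equiv.Set.image ι S (Fin.castLE_injective hab)
  have hv : Orthonormal ℝ ((ι '' S).domRestrict (Function.extend ι u 0)) := by
    convert hu.comp e.symm e.symm.injective
    funext x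
    obtain ⟨i, rfl⟩ := e.surjective x
    simp only [Set.domRestrict_apply, Function.comp_apply, Equiv.symm_apply_apply]
    exact (Fin.castLE_injective hab).extend_apply u 0 i
  obtain ⟨B, hB⟩ := hv.exists_orthonormalBasis_extension_of_card_eq (by simp)
  exact ⟨B, fun i hi => (hB _ ⟨i, hi, rfl⟩).trans ((Fin.castLE_injective hab).extend_apply u 0 i)⟩

theorem exists_orthogonal_eq_diagonal_mul_rectId {a b : ℕ} (hab : a ≤ b)
    {Y : Matrix (Fin a) (Fin b) ℝ} (hY : (Y * Yᵀ).IsDiag) :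
    ∃ (V : Matrix (Fin b) (Fin b) ℝ) (d : Fin a → ℝ), Vᵀ * V = 1 ∧ (∀ i, 0 ≤ d i) ∧
      Y = diagonal d * rectId a b * Vᵀ := by
  let y : Fin a → EuclideanSpace ℝ (Fin b) := fun i => WithLp.toLp 2 (Y i)
  obtain ⟨B, hB⟩ := exists_orthonormalBasis_castLE hab (y := y) fun i j hij => by
    simpa [y, EuclideanSpace.inner_eq_star_dotProduct, mul_apply, dotProduct, mul_comm] using
      hY hij.symm
  set V := (EuclideanSpace.basisFun (Fin b) ℝ).toBasis.toMatrix B.toBasis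
  refine ⟨V, fun i => ‖y i‖, (mem_orthogonalGroup_iff' _ ℝ).mp
    ((EuclideanSpace.basisFun (Fin b) ℝ).toMatrix_orthonormalBasis_mem_unitary B),
    fun i => norm_nonneg _, ?_⟩
  ext i j
  rw [Matrix.mul_assoc, diagonal_mul, mul_apply, Finset.sum_eq_single (Fin.castLE hab i)]
  · simp only [V, rectId, of_apply, transpose_apply, Fin.val_castLE, if_true, one_mul,
      Module.Basis.toMatrix_apply, OrthonormalBasis.coe_toBasis_repr_apply,
      EuclideanSpace.basisFun_repr, OrthonormalBasis.coe_toBasis]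
    by_cases hi : y i = 0
    · have hYi : Y i = 0 := congrArg WithLp.ofLp hi
      simp [hi, hYi]
    · rw [hB i hi]
      simp [y, norm_ne_zero_iff.mpr hi]
  · intro k _ hk
    simp [rectId, Fin.ext_iff] at hk ⊢
    exact fun h => absurd h.symm hk
  · simp

theorem exists_svd {a b : ℕ} (hab : a ≤ b) (X : Matrix (Fin a) (Fin b) ℝ) :
    ∃ (U : Matrix (Fin a) (Fin a) ℝ) (V : Matrix (Fin b) (Fin b) ℝ) (d : Fin a → ℝ),
      Uᵀ * U = 1 ∧ Vᵀ * V = 1 ∧ (∀ i, 0 ≤ d i) ∧ X = U * (diagonal d * rectId a b) * Vᵀ := by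
  have hXX : (X * Xᵀ).IsHermitian := by
    simpa [conjTranspose_eq_transpose_of_trivial] using isHermitian_mul_conjTranspose_self X
  obtain ⟨U, hU, hdiag⟩ := hXX.exists_orthogonal_isDiag
  have hY : (Uᵀ * X * (Uᵀ * X)ᵀ).IsDiag := by
    simpa [transpose_mul, Matrix.mul_assoc] using hdiag
  obtain ⟨V, d, hV, hd, hUX⟩ := exists_orthogonal_eq_diagonal_mul_rectId hab hY
  refine ⟨U, V, d, hU, hV, hd, ?_⟩
  rw [Matrix.mul_assoc U, ← hUX, ← Matrix.mul_assoc,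
    mul_eq_one_comm.mp hU, Matrix.one_mul]

theorem rank_mul_rectId {a b c : ℕ} (hab : a ≤ b) (M : Matrix (Fin c) (Fin a) ℝ) :
    (M * rectId a b).rank = M.rank := by
  refine le_antisymm (rank_mul_le_left _ _) ?_
  calc M.rank = (M * rectId a b * (rectId a b)ᵀ).rank := by
        rw [Matrix.mul_assoc, rectId_mul_transpose hab, Matrix.mul_one]
    _ ≤ (M * rectId a b).rank := rank_mul_le_left _ _

theorem rank_svd {a b : ℕ} (hab : a ≤ b) {U : Matrix (Fin a) (Fin a) ℝ}
    {V : Matrix (Fin b) (Fin b) ℝ} (hU : Uᵀ * U = 1) (hV : Vᵀ * V = 1) (d : Fin a → ℝ) :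
    (U * (diagonal d * rectId a b) * Vᵀ).rank = Fintype.card {i // d i ≠ 0} := by
  rw [rank_mul_eq_left_of_isUnit_det _ _ (isUnit_det_of_left_inverse (mul_eq_one_comm.mp hV)),
    rank_mul_eq_right_of_isUnit_det _ _ (isUnit_det_of_left_inverse hU), rank_mul_rectId hab,
    rank_diagonal]

theorem nuclearNorm_svd {a b : ℕ} (hab : a ≤ b) {U : Matrix (Fin a) (Fin a) ℝ}
    {V : Matrix (Fin b) (Fin b) ℝ} (hU : Uᵀ * U = 1) (hV : Vᵀ * V = 1) {d : Fin a → ℝ}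
    (hd : ∀ i, 0 ≤ d i) : nuclearNorm (U * (diagonal d * rectId a b) * Vᵀ) = ∑ i, d i := by
  rw [nuclearNorm_mul_mul_transpose hU hV,
    nuclearNorm_mul_rectId hab (posSemidef_diagonal_iff.mpr hd), trace_diagonal]

def orthConj {a b : ℕ} {U : Matrix (Fin a) (Fin a) ℝ} {V : Matrix (Fin b) (Fin b) ℝ}
    (hU : Uᵀ * U = 1) (hV : Vᵀ * V = 1) :
    Matrix (Fin a) (Fin b) ℝ ≃ₗ[ℝ] Matrix (Fin a) (Fin b) ℝ where
  toFun X := U * X * Vᵀ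
  invFun X := Uᵀ * X * V
  map_add' X Y := by simp only [Matrix.mul_add, Matrix.add_mul]
  map_smul' c X := by simp
  left_inv X := by
    simp only [Matrix.mul_assoc]
    rw [hV, Matrix.mul_one, ← Matrix.mul_assoc, hU, Matrix.one_mul]
  right_inv X := by
    simp only [Matrix.mul_assoc]
    rw [mul_eq_one_comm.mp hV, Matrix.mul_one, ← Matrix.mul_assoc, mul_eq_one_comm.mp hU,
      Matrix.one_mul]

def IsUniqueNuclearMinimizer {a b : ℕ} {F : Type*} [AddCommGroup F] [Module ℝ F]
    (Φ : Matrix (Fin a) (Fin b) ℝ →ₗ[ℝ] F) (X₀ : Matrix (Fin a) (Fin b) ℝ) : Prop :=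
  ∀ X, Φ X = Φ X₀ → X ≠ X₀ → nuclearNorm X₀ < nuclearNorm X

theorem isUniqueNuclearMinimizer_comp_iff {a b : ℕ} {F : Type*} [AddCommGroup F] [Module ℝ F]
    {Φ : Matrix (Fin a) (Fin b) ℝ →ₗ[ℝ] F}
    {L : Matrix (Fin a) (Fin b) ℝ ≃ₗ[ℝ] Matrix (Fin a) (Fin b) ℝ}
    (hL : ∀ X, nuclearNorm (L X) = nuclearNorm X) {X₀ : Matrix (Fin a) (Fin b) ℝ} :
    IsUniqueNuclearMinimizer (Φ ∘ₗ L.toLinearMap) X₀ ↔ IsUniqueNuclearMinimizer Φ (L X₀) := by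
  unfold IsUniqueNuclearMinimizer
  refine (L.surjective.forall.trans (forall_congr' fun X => ?_)).symm
  simp only [LinearMap.comp_apply, LinearEquiv.coe_coe, L.injective.ne_iff, hL]

theorem isUniqueNuclearMinimizer_equiv_comp_iff {a b : ℕ} {F G : Type*} [AddCommGroup F]
    [Module ℝ F] [AddCommGroup G] [Module ℝ G] (e : F ≃ₗ[ℝ] G)
    {Φ : Matrix (Fin a) (Fin b) ℝ →ₗ[ℝ] F}
    {X₀ : Matrix (Fin a) (Fin b) ℝ} :
    IsUniqueNuclearMinimizer (e.toLinearMap ∘ₗ Φ) X₀ ↔ IsUniqueNuclearMinimizer Φ X₀ := by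
  simp [IsUniqueNuclearMinimizer]

theorem neg_sum_mul_sq_le_dotProduct_mulVec {n : ℕ} {S : Matrix (Fin n) (Fin n) ℝ} (hS : S.IsSymm)
    (x : Fin n → ℝ) : -∑ i, (∑ j, |S i j|) * x i ^ 2 ≤ x ⬝ᵥ (S *ᵥ x) := by
  have hsymm : ∑ i, ∑ j, |S i j| * x j ^ 2 = ∑ i, ∑ j, |S i j| * x i ^ 2 := by
    rw [Finset.sum_comm]
    exact Finset.sum_congr rfl fun i _ => Finset.sum_congr rfl fun j _ => by rw [hS.apply i j]
  have hterm : ∀ i j, -(|S i j| * x i ^ 2 + |S i j| * x j ^ 2) / 2 ≤ x i * (S i j * x j) := by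
    intro i j
    have h2 : 2 * |x i * x j| ≤ x i ^ 2 + x j ^ 2 := by
      rw [abs_mul]; nlinarith [sq_nonneg (|x i| - |x j|), sq_abs (x i), sq_abs (x j)]
    have h3 := neg_abs_le (x i * (S i j * x j))
    rw [show |x i * (S i j * x j)| = |S i j| * |x i * x j| by rw [abs_mul, abs_mul, abs_mul]; ring]
      at h3
    nlinarith [abs_nonneg (S i j)]
  have hle : ∑ i, ∑ j, -(|S i j| * x i ^ 2 + |S i j| * x j ^ 2) / 2 ≤ x ⬝ᵥ (S *ᵥ x) := by
    simp only [dotProduct, mulVec, Finset.mul_sum]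
    exact Finset.sum_le_sum fun i _ => Finset.sum_le_sum fun j _ => hterm i j
  have heq : ∑ i, ∑ j, -(|S i j| * x i ^ 2 + |S i j| * x j ^ 2) / 2
      = -∑ i, (∑ j, |S i j|) * x i ^ 2 := by
    simp only [neg_div, Finset.sum_neg_distrib, ← Finset.sum_div, Finset.sum_add_distrib, hsymm,
      Finset.sum_mul]
    ring
  linarith

theorem exists_posSemidef_diagonal_add_smul {n : ℕ} {d : Fin n → ℝ} (hd : ∀ i, 0 ≤ d i)
    {S : Matrix (Fin n) (Fin n) ℝ} (hS : S.IsSymm) (hsupp : ∀ i j, d i = 0 → S i j = 0) :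
    ∃ t : ℝ, 0 < t ∧ (diagonal d + t • S).PosSemidef := by
  set R : Fin n → ℝ := fun i => ∑ j, |S i j|
  -- `R i / d i` is a junk `0` where `d i = 0`, but there the row `R i` vanishes anyway
  set C := ∑ i, R i / d i + 1
  have hR : ∀ i, 0 ≤ R i := fun i => Finset.sum_nonneg fun j _ => abs_nonneg _
  have hC : 0 < C := by
    have := Finset.sum_nonneg fun i (_ : i ∈ Finset.univ) => div_nonneg (hR i) (hd i)
    positivity
  have hRd : ∀ i, C⁻¹ * R i ≤ d i := by
    intro i
    by_cases hdi : d i = 0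
    · simp [R, hsupp i _ hdi, hdi]
    · have hle : R i / d i ≤ C := by
        have := Finset.single_le_sum (fun j (_ : j ∈ Finset.univ) => div_nonneg (hR j) (hd j))
          (Finset.mem_univ i)
        linarith
      rw [inv_mul_le_iff₀ hC, ← div_le_iff₀ (lt_of_le_of_ne (hd i) (Ne.symm hdi))]
      exact hle
  refine ⟨C⁻¹, inv_pos.mpr hC, .of_dotProduct_mulVec_nonneg ?_ fun x => ?_⟩
  · simp [IsHermitian, conjTranspose_eq_transpose_of_trivial, hS.eq]
  · have hquad := neg_sum_mul_sq_le_dotProduct_mulVec hS x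
    have hdiag : x ⬝ᵥ (diagonal d *ᵥ x) = ∑ i, d i * x i ^ 2 := by
      simp only [dotProduct, mulVec_diagonal]
      exact Finset.sum_congr rfl fun i _ => by ring
    have hsum : 0 ≤ ∑ i, (d i - C⁻¹ * R i) * x i ^ 2 :=
      Finset.sum_nonneg fun i _ => mul_nonneg (sub_nonneg.mpr (hRd i)) (sq_nonneg _)
    simp only [star_trivial, add_mulVec, dotProduct_add, smul_mulVec, dotProduct_smul, hdiag,
      smul_eq_mul]
    simp only [sub_mul, Finset.sum_sub_distrib, mul_assoc, ← Finset.mul_sum] at hsum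
    nlinarith [inv_pos.mpr hC]

section DiagonalMinimizer

variable {a b : ℕ} {F : Type*} [AddCommGroup F] [Module ℝ F] {d : Fin a → ℝ}
  {Φ : Matrix (Fin a) (Fin b) ℝ →ₗ[ℝ] F}

theorem IsUniqueNuclearMinimizer.trace_pos_of_map_eq_zero (hab : a ≤ b) (hd : ∀ i, 0 ≤ d i)
    (hΦ : IsUniqueNuclearMinimizer Φ (diagonal d * rectId a b)) {S : Matrix (Fin a) (Fin a) ℝ}
    (hS : S.IsSymm) (hsupp : ∀ i j, d i = 0 → S i j = 0) (hker : Φ (S * rectId a b) = 0)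
    (hS0 : S ≠ 0) : 0 < S.trace := by
  obtain ⟨t, ht, hpsd⟩ := exists_posSemidef_diagonal_add_smul hd hS hsupp
  have hX : (diagonal d + t • S) * rectId a b = diagonal d * rectId a b + t • (S * rectId a b) := by
    rw [Matrix.add_mul, Matrix.smul_mul]
  have hSJ : S * rectId a b ≠ 0 := fun h => hS0 <| by
    rw [← Matrix.mul_one S, ← rectId_mul_transpose hab, ← Matrix.mul_assoc, h, Matrix.zero_mul]
  have hlt := hΦ ((diagonal d + t • S) * rectId a b)
    (by rw [hX, map_add, map_smul, hker, smul_zero, add_zero])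
    (by rw [hX]; simpa [ht.ne'] using hSJ)
  rw [nuclearNorm_mul_rectId hab hpsd, nuclearNorm_mul_rectId hab (posSemidef_diagonal_iff.mpr hd),
    trace_add, trace_smul, smul_eq_mul] at hlt
  nlinarith

theorem IsUniqueNuclearMinimizer.eq_zero_of_map_eq_zero (hab : a ≤ b) (hd : ∀ i, 0 ≤ d i)
    (hΦ : IsUniqueNuclearMinimizer Φ (diagonal d * rectId a b)) {S : Matrix (Fin a) (Fin a) ℝ}
    (hS : S.IsSymm) (hsupp : ∀ i j, d i = 0 → S i j = 0) (hker : Φ (S * rectId a b) = 0) :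
    S = 0 := by
  by_contra hS0
  have hpos := hΦ.trace_pos_of_map_eq_zero hab hd hS hsupp hker hS0
  have hneg := hΦ.trace_pos_of_map_eq_zero hab hd hS.neg (fun i j hi => by simp [hsupp i j hi])
    (by rw [Matrix.neg_mul, map_neg, hker, neg_zero]) (neg_ne_zero.mpr hS0)
  rw [trace_neg] at hneg
  linarith

end DiagonalMinimizer

def symExtend {n : ℕ} (p : Fin n → Prop) [DecidablePred p] :
    (Sym2 {i // p i} → ℝ) →ₗ[ℝ] Matrix (Fin n) (Fin n) ℝ where
  toFun f := Matrix.of fun i j => if h : p i ∧ p j then f s(⟨i, h.1⟩, ⟨j, h.2⟩) else 0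
  map_add' f g := by
    ext i j; simp only [of_apply, Matrix.add_apply, Pi.add_apply]; split_ifs <;> simp
  map_smul' c f := by
    ext i j; simp only [of_apply, Matrix.smul_apply, Pi.smul_apply]; split_ifs <;> simp

section SymExtend

variable {n : ℕ} {p : Fin n → Prop} [DecidablePred p]

theorem symExtend_apply_coe (f : Sym2 {i // p i} → ℝ) (i j : {i // p i}) :
    symExtend p f i j = f s(i, j) := by
  simp [symExtend, i.2, j.2]

theorem symExtend_apply_of_not (f : Sym2 {i // p i} → ℝ) {i : Fin n} (hi : ¬p i) (j : Fin n) :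
    symExtend p f i j = 0 := by
  simp [symExtend, hi]

theorem isSymm_symExtend (f : Sym2 {i // p i} → ℝ) : (symExtend p f).IsSymm := by
  ext i j
  simp only [symExtend, transpose_apply, LinearMap.coe_mk, AddHom.coe_mk, of_apply]
  split_ifs <;> first | rfl | exact congrArg f Sym2.eq_swap | tauto

theorem symExtend_injective : Function.Injective (symExtend p) := by
  refine (injective_iff_map_eq_zero _).mpr fun f hf => funext fun q => ?_
  induction q using Sym2.ind with
  | _ i j => simpa [symExtend_apply_coe] using congrFun (congrFun hf i) j

end SymExtend

theorem Sym2.card_eq_mul_succ_div_two (α : Type*) [Fintype α] :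
    Fintype.card (Sym2 α) = Fintype.card α * (Fintype.card α + 1) / 2 := by
  rw [Sym2.card, Nat.choose_two_right, Nat.add_sub_cancel, Nat.mul_comm]

theorem IsUniqueNuclearMinimizer.card_le_finrank {a b : ℕ} (hab : a ≤ b) {d : Fin a → ℝ}
    (hd : ∀ i, 0 ≤ d i) {F : Type*} [AddCommGroup F] [Module ℝ F] [FiniteDimensional ℝ F]
    {Φ : Matrix (Fin a) (Fin b) ℝ →ₗ[ℝ] F}
    (hΦ : IsUniqueNuclearMinimizer Φ (diagonal d * rectId a b)) :
    Fintype.card {i // d i ≠ 0} * (Fintype.card {i // d i ≠ 0} + 1) / 2 ≤ Module.finrank ℝ F := by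
  set T := Φ ∘ₗ mulRightLinearMap (Fin a) ℝ (rectId a b) ∘ₗ symExtend (d · ≠ 0)
  have hT : Function.Injective T := by
    refine (injective_iff_map_eq_zero _).mpr fun f hf => symExtend_injective ?_
    rw [map_zero]
    exact hΦ.eq_zero_of_map_eq_zero hab hd (isSymm_symExtend f)
      (fun i j hi => symExtend_apply_of_not f (not_not.mpr hi) j) hf
  rw [← Sym2.card_eq_mul_succ_div_two, ← Module.finrank_fintype_fun_eq_card ℝ]
  exact LinearMap.finrank_le_finrank_of_injective hT

theorem dotProduct_self_row_of_mul_transpose_eq_one {m n : Type*} [Fintype n] [DecidableEq m]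
    {M : Matrix m n ℝ} (hM : M * Mᵀ = 1) (k : m) : M k ⬝ᵥ M k = 1 := by
  simpa [mul_apply, dotProduct] using congrFun (congrFun hM k) k

theorem dotProduct_le_one {n : Type*} [Fintype n] {x y : n → ℝ} (hx : x ⬝ᵥ x = 1)
    (hy : y ⬝ᵥ y ≤ 1) : x ⬝ᵥ y ≤ 1 := by
  have := dotProduct_self_star_nonneg (x - y)
  simp only [star_trivial, sub_dotProduct, dotProduct_sub, dotProduct_comm y x] at this
  linarith

theorem eq_of_dotProduct_eq_one {n : Type*} [Fintype n] {x y : n → ℝ} (hx : x ⬝ᵥ x = 1)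
    (hy : y ⬝ᵥ y ≤ 1) (hxy : x ⬝ᵥ y = 1) : x = y := by
  have h : (x - y) ⬝ᵥ (x - y) ≤ 0 := by
    simp only [sub_dotProduct, dotProduct_sub, dotProduct_comm y x]
    linarith
  exact sub_eq_zero.mp (dotProduct_self_eq_zero.mp (le_antisymm h (dotProduct_self_star_nonneg _)))

theorem finner_svd {a b : ℕ} (E : Matrix (Fin a) (Fin b) ℝ) (P : Matrix (Fin a) (Fin a) ℝ)
    (Q : Matrix (Fin b) (Fin b) ℝ) (c : Fin a → ℝ) :
    finner E (P * (diagonal c * rectId a b) * Qᵀ)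
      = ∑ k, c k * ((rectId a b * Qᵀ) k ⬝ᵥ (Pᵀ * E) k) := by
  have : Eᵀ * (P * (diagonal c * rectId a b) * Qᵀ)
      = (Eᵀ * P) * (diagonal c * (rectId a b * Qᵀ)) := by simp only [Matrix.mul_assoc]
  rw [finner, this, trace_mul_comm, trace]
  refine Finset.sum_congr rfl fun k _ => ?_
  rw [diag_apply, Matrix.mul_assoc, diagonal_mul, mul_apply]
  simp only [dotProduct, mul_apply, transpose_apply, mul_comm]

def supportProj {a : ℕ} (p : Fin a → Prop) [DecidablePred p] : Matrix (Fin a) (Fin a) ℝ :=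
  diagonal fun i => if p i then 1 else 0

section PartialTrace

variable {a b : ℕ} {p : Fin a → Prop} [DecidablePred p] {P : Matrix (Fin a) (Fin a) ℝ}
  {Q : Matrix (Fin b) (Fin b) ℝ} {c : Fin a → ℝ}

theorem supportProj_mul_rectId_mul_transpose (hab : a ≤ b) :
    supportProj p * rectId a b * (supportProj p * rectId a b)ᵀ = supportProj p := by
  rw [transpose_mul, Matrix.mul_assoc, ← Matrix.mul_assoc (rectId a b), rectId_mul_transpose hab,
    Matrix.one_mul, supportProj, diagonal_transpose, diagonal_mul_diagonal]
  congr 1; ext i; split_ifs <;> simp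

theorem dotProduct_self_row_transpose_mul_supportProj (hab : a ≤ b) (P : Matrix (Fin a) (Fin a) ℝ)
    (k : Fin a) : (Pᵀ * (supportProj p * rectId a b)) k ⬝ᵥ (Pᵀ * (supportProj p * rectId a b)) k
      = ∑ i, if p i then P i k ^ 2 else 0 := by
  have hgram : Pᵀ * (supportProj p * rectId a b) * (Pᵀ * (supportProj p * rectId a b))ᵀ
      = Pᵀ * supportProj p * P := by
    rw [transpose_mul, transpose_transpose, Matrix.mul_assoc, ← Matrix.mul_assoc _ _ P,
      supportProj_mul_rectId_mul_transpose hab, ← Matrix.mul_assoc]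
  calc _ = (Pᵀ * (supportProj p * rectId a b) * (Pᵀ * (supportProj p * rectId a b))ᵀ) k k := by
        simp only [mul_apply', transpose_apply]; rfl
    _ = ∑ i, if p i then P i k ^ 2 else 0 := by
        rw [hgram, mul_apply]
        refine Finset.sum_congr rfl fun i _ => ?_
        simp only [supportProj, mul_diagonal, transpose_apply]
        split_ifs <;> ring

theorem sum_sq_apply_eq_one (hP : Pᵀ * P = 1) (k : Fin a) : ∑ i, P i k ^ 2 = 1 := by
  simpa [mul_apply, sq] using congrFun (congrFun hP k) k

theorem dotProduct_self_row_transpose_mul_supportProj_le_one (hab : a ≤ b) (hP : Pᵀ * P = 1)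
    (k : Fin a) :
    (Pᵀ * (supportProj p * rectId a b)) k ⬝ᵥ (Pᵀ * (supportProj p * rectId a b)) k ≤ 1 := by
  rw [dotProduct_self_row_transpose_mul_supportProj hab, ← sum_sq_apply_eq_one hP k]
  exact Finset.sum_le_sum fun i _ => by split_ifs <;> simp [sq_nonneg]

theorem rectId_mul_transpose_mul_transpose (hab : a ≤ b) (hQ : Qᵀ * Q = 1) :
    rectId a b * Qᵀ * (rectId a b * Qᵀ)ᵀ = 1 := by
  rw [transpose_mul, transpose_transpose, Matrix.mul_assoc, ← Matrix.mul_assoc Qᵀ, hQ,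
    Matrix.one_mul, rectId_mul_transpose hab]

theorem finner_supportProj_mul_rectId_svd_le (hab : a ≤ b) (hP : Pᵀ * P = 1) (hQ : Qᵀ * Q = 1)
    (hc : ∀ k, 0 ≤ c k) :
    finner (supportProj p * rectId a b) (P * (diagonal c * rectId a b) * Qᵀ) ≤ ∑ k, c k := by
  rw [finner_svd]
  refine Finset.sum_le_sum fun k _ => mul_le_of_le_one_right (hc k) (dotProduct_le_one ?_ ?_)
  · exact dotProduct_self_row_of_mul_transpose_eq_one (rectId_mul_transpose_mul_transpose hab hQ) k
  · exact dotProduct_self_row_transpose_mul_supportProj_le_one hab hP k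

theorem row_eq_of_finner_svd_eq (hab : a ≤ b) (hP : Pᵀ * P = 1) (hQ : Qᵀ * Q = 1)
    (hc : ∀ k, 0 ≤ c k)
    (heq : finner (supportProj p * rectId a b) (P * (diagonal c * rectId a b) * Qᵀ) = ∑ k, c k)
    {k : Fin a} (hk : c k ≠ 0) :
    (rectId a b * Qᵀ) k = (Pᵀ * (supportProj p * rectId a b)) k := by
  have hW := dotProduct_self_row_of_mul_transpose_eq_one
    (rectId_mul_transpose_mul_transpose hab hQ)
  have hY := dotProduct_self_row_transpose_mul_supportProj_le_one (p := p) hab hP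
  rw [finner_svd] at heq
  have hk' := (Finset.sum_eq_sum_iff_of_le fun k _ => mul_le_of_le_one_right (hc k)
    (dotProduct_le_one (hW k) (hY k))).mp heq k (Finset.mem_univ k)
  exact eq_of_dotProduct_eq_one (hW k) (hY k) ((mul_eq_left₀ hk).mp hk')

theorem apply_eq_zero_of_finner_svd_eq (hab : a ≤ b) (hP : Pᵀ * P = 1) (hQ : Qᵀ * Q = 1)
    (hc : ∀ k, 0 ≤ c k)
    (heq : finner (supportProj p * rectId a b) (P * (diagonal c * rectId a b) * Qᵀ) = ∑ k, c k)
    {k : Fin a} (hk : c k ≠ 0) {i : Fin a} (hi : ¬p i) : P i k = 0 := by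
  have hYk := row_eq_of_finner_svd_eq hab hP hQ hc heq hk ▸
    dotProduct_self_row_of_mul_transpose_eq_one (rectId_mul_transpose_mul_transpose hab hQ) k
  rw [dotProduct_self_row_transpose_mul_supportProj hab, ← sum_sq_apply_eq_one hP k] at hYk
  have := (Finset.sum_eq_sum_iff_of_le fun i _ => by split_ifs <;> simp [sq_nonneg]).mp hYk i
    (Finset.mem_univ i)
  simpa [hi] using this.symm

theorem exists_isSymm_eq_mul_rectId_of_finner_svd_eq (hab : a ≤ b) (hP : Pᵀ * P = 1)
    (hQ : Qᵀ * Q = 1) (hc : ∀ k, 0 ≤ c k)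
    (heq : finner (supportProj p * rectId a b) (P * (diagonal c * rectId a b) * Qᵀ) = ∑ k, c k) :
    ∃ M : Matrix (Fin a) (Fin a) ℝ, M.IsSymm ∧ (∀ i j, ¬p i → M i j = 0) ∧
      P * (diagonal c * rectId a b) * Qᵀ = M * rectId a b := by
  have hPC : supportProj p * (P * diagonal c) = P * diagonal c := by
    ext i k
    by_cases hi : p i
    · simp [supportProj, hi]
    · by_cases hk : c k = 0
      · simp [supportProj, hk]
      · simp [supportProj, hi, apply_eq_zero_of_finner_svd_eq hab hP hQ hc heq hk hi]
  have hCW : diagonal c * (rectId a b * Qᵀ) = diagonal c * (Pᵀ * (supportProj p * rectId a b)) := by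
    ext k j
    by_cases hk : c k = 0
    · simp [hk]
    · simp only [diagonal_mul, row_eq_of_finner_svd_eq hab hP hQ hc heq hk]
  set M := P * diagonal c * Pᵀ
  have hM : M.IsSymm := by simp [M, IsSymm, Matrix.mul_assoc]
  have hPM : supportProj p * M = M := by simp only [M, ← Matrix.mul_assoc, hPC]
  have hMP : M * supportProj p = M := by
    simpa [supportProj, hM.eq] using congrArg transpose hPM
  refine ⟨M, hM, fun i j hi => ?_, ?_⟩
  · rw [← hPM]
    simp [supportProj, hi]
  · calc P * (diagonal c * rectId a b) * Qᵀ = P * (diagonal c * (rectId a b * Qᵀ)) := by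
          simp only [Matrix.mul_assoc]
      _ = M * supportProj p * rectId a b := by rw [hCW]; simp only [M, Matrix.mul_assoc]
      _ = M * rectId a b := by rw [hMP]

end PartialTrace

-- `X * (rectId a b)ᵀ` is the leading `a × a` block of `X`.
def blockSym {a b : ℕ} (p : Fin a → Prop) [DecidablePred p] :
    Matrix (Fin a) (Fin b) ℝ →ₗ[ℝ] Sym2 {i // p i} → ℝ where
  toFun X := Sym2.lift ⟨fun i j => (X * (rectId a b)ᵀ) i j + (X * (rectId a b)ᵀ) j i,
    fun _ _ => add_comm _ _⟩
  map_add' X Y := by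
    ext q; induction q using Sym2.ind with
    | _ i j => simp only [Sym2.lift_mk, Matrix.add_mul, Matrix.add_apply, Pi.add_apply]; ring
  map_smul' t X := by
    ext q; induction q using Sym2.ind with
    | _ i j => simp only [Sym2.lift_mk, Matrix.smul_mul, Matrix.smul_apply, Pi.smul_apply,
        smul_eq_mul, RingHom.id_apply]; ring

section BlockSym

variable {a b : ℕ} {p : Fin a → Prop} [DecidablePred p]

theorem blockSym_mk (X : Matrix (Fin a) (Fin b) ℝ) (i j : {i // p i}) :
    blockSym p X s(i, j) = (X * (rectId a b)ᵀ) i j + (X * (rectId a b)ᵀ) j i :=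
  Sym2.lift_mk _ _ _

theorem finner_supportProj_mul_rectId (X : Matrix (Fin a) (Fin b) ℝ) :
    finner (supportProj p * rectId a b) X = ∑ i, if p i then (X * (rectId a b)ᵀ) i i else 0 := by
  rw [finner, transpose_mul, Matrix.mul_assoc, trace_mul_comm, Matrix.mul_assoc, trace]
  refine Finset.sum_congr rfl fun i _ => ?_
  simp [supportProj]

theorem finner_eq_of_blockSym_eq {X Y : Matrix (Fin a) (Fin b) ℝ}
    (h : blockSym p X = blockSym p Y) :
    finner (supportProj p * rectId a b) X = finner (supportProj p * rectId a b) Y := by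
  simp only [finner_supportProj_mul_rectId]
  refine Finset.sum_congr rfl fun i _ => ?_
  split_ifs with hi
  · have := congrFun h s(⟨i, hi⟩, ⟨i, hi⟩)
    simp only [blockSym_mk] at this
    linarith
  · rfl

end BlockSym

theorem eq_diagonal_of_blockSym_eq {a b : ℕ} (hab : a ≤ b) {d : Fin a → ℝ}
    {M : Matrix (Fin a) (Fin a) ℝ} (hM : M.IsSymm) (hsupp : ∀ i j, d i = 0 → M i j = 0)
    (h : blockSym (d · ≠ 0) (M * rectId a b) = blockSym (d · ≠ 0) (diagonal d * rectId a b)) :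
    M = diagonal d := by
  ext i j
  by_cases hi : d i = 0
  · simp [hsupp i j hi, diagonal_apply, hi]
  by_cases hj : d j = 0
  · rw [hM.apply j i, hsupp j i hj, diagonal_apply]
    split_ifs with hij
    · exact (hij ▸ hj).symm
    · rfl
  have := congrFun h s(⟨i, hi⟩, ⟨j, hj⟩)
  simp only [blockSym_mk, Matrix.mul_assoc, rectId_mul_transpose hab, Matrix.mul_one,
    hM.apply i j, (isSymm_diagonal d).apply i j] at this
  linarith

theorem isUniqueNuclearMinimizer_blockSym {a b : ℕ} (hab : a ≤ b) {d : Fin a → ℝ}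
    (hd : ∀ i, 0 ≤ d i) :
    IsUniqueNuclearMinimizer (blockSym (d · ≠ 0)) (diagonal d * rectId a b) := by
  intro X hX hne
  obtain ⟨P, Q, c, hP, hQ, hc, rfl⟩ := exists_svd hab X
  have hfinner : finner (supportProj (d · ≠ 0) * rectId a b) (diagonal d * rectId a b)
      = ∑ i, d i := by
    rw [finner_supportProj_mul_rectId, Matrix.mul_assoc, rectId_mul_transpose hab, Matrix.mul_one]
    exact Finset.sum_congr rfl fun i _ => by split_ifs with hi <;> simp_all
  rw [nuclearNorm_svd hab hP hQ hc, nuclearNorm_mul_rectId hab (posSemidef_diagonal_iff.mpr hd),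
    trace_diagonal, ← hfinner, ← finner_eq_of_blockSym_eq hX]
  refine lt_of_le_of_ne (finner_supportProj_mul_rectId_svd_le hab hP hQ hc) fun heq => hne ?_
  obtain ⟨M, hM, hsupp, hXM⟩ := exists_isSymm_eq_mul_rectId_of_finner_svd_eq hab hP hQ hc heq
  rw [hXM, eq_diagonal_of_blockSym_eq hab hM (fun i j hi => hsupp i j (not_not.mpr hi)) (hXM ▸ hX)]

/-- **Corollary (Minimum bound for exact recovery).**
Let `X₀` be an `n1 × n2` matrix of rank `r`.
(i) If `Φ : ℝ^{n1×n2} → ℝ^m` is linear and `X₀` is the unique optimal solution of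
`min ‖X‖_* s.t. ΦX = ΦX₀`, then `m ≥ r(r+1)/2`.
(ii) There exists a linear operator `Φ : ℝ^{n1×n2} → ℝ^{r(r+1)/2}` for which `X₀` is
the unique optimal solution of this problem. -/
theorem minimum_measurement_bound (n1 n2 r : ℕ) (hn : n1 ≤ n2)
    (X₀ : Matrix (Fin n1) (Fin n2) ℝ) (hr : X₀.rank = r) :
    (∀ (m : ℕ) (Φ : Matrix (Fin n1) (Fin n2) ℝ →ₗ[ℝ] EuclideanSpace ℝ (Fin m)),
      (∀ X, Φ X = Φ X₀ → X ≠ X₀ → nuclearNorm X₀ < nuclearNorm X) →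
      r * (r + 1) / 2 ≤ m) ∧
    (∃ Φ : Matrix (Fin n1) (Fin n2) ℝ →ₗ[ℝ] EuclideanSpace ℝ (Fin (r * (r + 1) / 2)),
      ∀ X, Φ X = Φ X₀ → X ≠ X₀ → nuclearNorm X₀ < nuclearNorm X) := by
  obtain ⟨U, V, d, hU, hV, hd, rfl⟩ := exists_svd hn X₀
  rw [rank_svd hn hU hV] at hr
  subst hr
  set L := orthConj hU hV
  have hL : ∀ X, nuclearNorm (L X) = nuclearNorm X := nuclearNorm_mul_mul_transpose hU hV
  refine ⟨fun m Φ hΦ => ?_, ?_⟩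
  · have hcanon := (isUniqueNuclearMinimizer_comp_iff hL).mpr hΦ
    simpa using hcanon.card_le_finrank hn hd
  · have hdim : Module.finrank ℝ (Sym2 {i // d i ≠ 0} → ℝ)
        = Module.finrank ℝ (EuclideanSpace ℝ (Fin (Fintype.card {i // d i ≠ 0} *
            (Fintype.card {i // d i ≠ 0} + 1) / 2))) := by
      simp [Sym2.card_eq_mul_succ_div_two]
    set Ψ := (LinearEquiv.ofFinrankEq _ _ hdim).toLinearMap ∘ₗ blockSym (b := n2) (d · ≠ 0)
    have hΨ : IsUniqueNuclearMinimizer Ψ (diagonal d * rectId n1 n2) :=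
      (isUniqueNuclearMinimizer_equiv_comp_iff _).mpr (isUniqueNuclearMinimizer_blockSym hn hd)
    refine ⟨Ψ ∘ₗ L.symm.toLinearMap, (isUniqueNuclearMinimizer_comp_iff hL).mp ?_⟩
    rwa [LinearMap.comp_assoc, ← LinearEquiv.coe_trans, LinearEquiv.self_trans_symm,
      LinearEquiv.refl_toLinearMap, LinearMap.comp_id]
end

section
/- Consider the problem min_{X ∈ ℝ^{2×2}} ‖X‖_* subject to ΦX = (1, 0)ᵀ, where ΦX = (X₁₁ + X₂₂, X₁₂ − X₂₁ + X₂₂)ᵀ. Then X₀ = [[1,0],[0,0]] is the unique optimal solution of this problem, but X₀ is NOT a strong solution: there do not exist ε, κ > 0 such that ‖X‖_* − ‖X₀‖_* ≥ (κ/2)‖X − X₀‖_F² for all X with ΦX = (1,0)ᵀ and ‖X − X₀‖_F < ε. -/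
open Matrix Filter Set

/-- The spectral norm `‖X‖ = σ₁(X)`. -/
noncomputable def spectralNorm' {a b : ℕ} (X : Matrix (Fin a) (Fin b) ℝ) : ℝ :=
  ⨆ i, svals X i

/-!
For a `2 × 2` matrix the singular values satisfy `σ₁² + σ₂² = ‖X‖_F²` and `σ₁σ₂ = |det X|`, so
`‖X‖_*² = ‖X‖_F² + 2 |det X|`. On the feasible affine plane `‖X‖_F² + 2 det X = 1 + X₂₂²`, hence
`‖X‖_* ≥ 1 = ‖X₀‖_*`, and equality forces `X₂₂ = 0` and `det X = -X₁₂² ≥ 0`, i.e. `X = X₀`.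
Along the feasible curve `u ↦ [[1 - u², u/2], [u/2 + u², u²]]` the determinant stays nonnegative
for small `u`, so `‖X‖_* = √(1 + u⁴)` exceeds `1` only by `O(u⁴)`, while `‖X - X₀‖_F ≈ u / √2`:
no quadratic growth bound can hold.
-/

theorem nuclearNorm_eq_sum_sqrt_eigenvalues {a b : ℕ} (X : Matrix (Fin a) (Fin b) ℝ) :
    nuclearNorm X = ∑ i, √((isHermitian_mul_conjTranspose_self X).eigenvalues i) :=
  Fintype.sum_equiv (Fin.revPerm.trans (Tuple.sort _)) _ _ fun _ => rfl

theorem frobNorm_sq {m n : ℕ} (A : Matrix (Fin m) (Fin n) ℝ) :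
    frobNorm A ^ 2 = ∑ i, ∑ j, A i j ^ 2 := by
  rw [frobNorm, Real.sq_sqrt, finner, trace, Finset.sum_comm]
  · simp [mul_apply, sq]
  · simp only [finner, trace, diag, mul_apply, transpose_apply]
    exact Finset.sum_nonneg fun _ _ => Finset.sum_nonneg fun _ _ => mul_self_nonneg _

theorem trace_mul_conjTranspose_self_eq_frobNorm_sq {m n : ℕ} (X : Matrix (Fin m) (Fin n) ℝ) :
    (X * Xᴴ).trace = frobNorm X ^ 2 := by
  rw [frobNorm_sq, trace]
  simp [mul_apply, sq]

theorem nuclearNorm_fin_two (X : Matrix (Fin 2) (Fin 2) ℝ) :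
    nuclearNorm X = √(frobNorm X ^ 2 + 2 * |X.det|) := by
  set hX := isHermitian_mul_conjTranspose_self X
  have hμ : ∀ i, 0 ≤ hX.eigenvalues i := (posSemidef_self_mul_conjTranspose X).eigenvalues_nonneg
  have hsum : hX.eigenvalues 0 + hX.eigenvalues 1 = frobNorm X ^ 2 := by
    have := hX.trace_eq_sum_eigenvalues
    rw [trace_mul_conjTranspose_self_eq_frobNorm_sq] at this
    simpa [Fin.sum_univ_two] using this.symm
  have hprod : hX.eigenvalues 0 * hX.eigenvalues 1 = X.det ^ 2 := by
    have := hX.det_eq_prod_eigenvalues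
    simp only [Fin.prod_univ_two, det_mul, det_conjTranspose, star_trivial] at this
    simpa [sq] using this.symm
  have hroots : √(hX.eigenvalues 0) * √(hX.eigenvalues 1) = |X.det| := by
    rw [← Real.sqrt_mul (hμ 0), hprod, Real.sqrt_sq_eq_abs]
  rw [nuclearNorm_eq_sum_sqrt_eigenvalues, Fin.sum_univ_two, eq_comm, Real.sqrt_eq_iff_eq_sq
    (by positivity) (by positivity), add_sq, Real.sq_sqrt (hμ 0), Real.sq_sqrt (hμ 1), ← hsum,
    mul_assoc, hroots]
  ring

theorem frobNorm_sq_fin_two (X : Matrix (Fin 2) (Fin 2) ℝ) :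
    frobNorm X ^ 2 = X 0 0 ^ 2 + X 0 1 ^ 2 + X 1 0 ^ 2 + X 1 1 ^ 2 := by
  simp [frobNorm_sq, Fin.sum_univ_two, add_assoc]

theorem nuclearNorm_diag_one_zero : nuclearNorm !![(1 : ℝ), 0; 0, 0] = 1 := by
  simp [nuclearNorm_fin_two, frobNorm_sq_fin_two, det_fin_two_of]

section Feasible

variable {X : Matrix (Fin 2) (Fin 2) ℝ}

theorem frobNorm_sq_add_two_det (h₁ : X 0 0 + X 1 1 = 1) (h₂ : X 0 1 - X 1 0 + X 1 1 = 0) :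
    frobNorm X ^ 2 + 2 * X.det = 1 + X 1 1 ^ 2 := by
  rw [frobNorm_sq_fin_two, det_fin_two, eq_sub_of_add_eq h₁,
    show X 1 0 = X 0 1 + X 1 1 by linarith]
  ring

theorem one_lt_nuclearNorm_of_ne (h₁ : X 0 0 + X 1 1 = 1) (h₂ : X 0 1 - X 1 0 + X 1 1 = 0)
    (hX : X ≠ !![(1 : ℝ), 0; 0, 0]) : 1 < nuclearNorm X := by
  rw [nuclearNorm_fin_two, Real.lt_sqrt zero_le_one, one_pow]
  by_contra! hle
  have hd : X 1 1 = 0 := by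
    nlinarith [frobNorm_sq_add_two_det h₁ h₂, le_abs_self X.det]
  have hb : X 0 1 = 0 := by
    rw [frobNorm_sq_fin_two] at hle
    nlinarith [neg_abs_le X.det, det_fin_two X]
  apply hX
  ext i j
  fin_cases i <;> fin_cases j <;> simp <;> linarith

end Feasible

noncomputable def slowCurve (u : ℝ) : Matrix (Fin 2) (Fin 2) ℝ :=
  !![1 - u ^ 2, u / 2; u / 2 + u ^ 2, u ^ 2]

theorem frobNorm_slowCurve_sub_sq (u : ℝ) :
    frobNorm (slowCurve u - !![(1 : ℝ), 0; 0, 0]) ^ 2 = u ^ 2 / 2 + u ^ 3 + 3 * u ^ 4 := by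
  simp [frobNorm_sq_fin_two, slowCurve]
  ring

theorem nuclearNorm_slowCurve_le {u : ℝ} (hu₀ : 0 ≤ u) (hu : u ≤ 1 / 2) :
    nuclearNorm (slowCurve u) ≤ 1 + u ^ 4 / 2 := by
  have hdet : 0 ≤ (slowCurve u).det := by
    simp only [slowCurve, det_fin_two_of]
    nlinarith [mul_le_mul_of_nonneg_left hu (pow_nonneg hu₀ 3)]
  have hfeas := frobNorm_sq_add_two_det (X := slowCurve u)
    (by simp [slowCurve]) (by simp [slowCurve])
  rw [nuclearNorm_fin_two, abs_of_nonneg hdet, hfeas, Real.sqrt_le_iff]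
  refine ⟨by positivity, ?_⟩
  simp only [slowCurve, of_apply, cons_val', cons_val_one, cons_val_fin_one, empty_val']
  nlinarith [pow_nonneg hu₀ 8]

/-- **Example (A unique solution which is not a strong solution).**
For the problem `min ‖X‖_*` over `2 × 2` matrices subject to
`X₁₁ + X₂₂ = 1` and `X₁₂ − X₂₁ + X₂₂ = 0`, the matrix `X₀ = [[1,0],[0,0]]` is the
unique optimal solution, but it is not a strong solution. -/
theorem unique_but_not_strong_2x2 :
    (∀ X : Matrix (Fin 2) (Fin 2) ℝ,
      X 0 0 + X 1 1 = 1 → X 0 1 - X 1 0 + X 1 1 = 0 → X ≠ !![(1:ℝ), 0; 0, 0] →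
      nuclearNorm !![(1:ℝ), 0; 0, 0] < nuclearNorm X) ∧
    ¬ (∃ ε > (0:ℝ), ∃ κ > (0:ℝ), ∀ X : Matrix (Fin 2) (Fin 2) ℝ,
      X 0 0 + X 1 1 = 1 → X 0 1 - X 1 0 + X 1 1 = 0 →
      frobNorm (X - !![(1:ℝ), 0; 0, 0]) < ε →
      κ / 2 * frobNorm (X - !![(1:ℝ), 0; 0, 0]) ^ 2 ≤
        nuclearNorm X - nuclearNorm !![(1:ℝ), 0; 0, 0]) := by
  rw [nuclearNorm_diag_one_zero]
  refine ⟨fun X h₁ h₂ hX => one_lt_nuclearNorm_of_ne h₁ h₂ hX, ?_⟩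
  rintro ⟨ε, hε, κ, hκ, hstrong⟩
  set u := min (1 / 2) (min (ε / 2) (κ / 2))
  have hu₀ : 0 < u := by positivity
  have hu : u ≤ 1 / 2 := min_le_left _ _
  have huε : u ≤ ε / 2 := (min_le_right _ _).trans (min_le_left _ _)
  have huκ : u ≤ κ / 2 := (min_le_right _ _).trans (min_le_right _ _)
  have hdist := frobNorm_slowCurve_sub_sq u
  have hdist_le : u ^ 2 / 2 + u ^ 3 + 3 * u ^ 4 ≤ 2 * u ^ 2 := by
    nlinarith [pow_le_pow_left₀ hu₀.le hu 2, pow_pos hu₀ 2]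
  have hclose : frobNorm (slowCurve u - !![(1 : ℝ), 0; 0, 0]) < ε := by
    refine lt_of_pow_lt_pow_left₀ 2 hε.le ?_
    nlinarith [pow_le_pow_left₀ hu₀.le huε 2]
  have hgap := hstrong _ (by simp [slowCurve]) (by simp [slowCurve]) hclose
  rw [hdist] at hgap
  have hκu : κ * u ^ 2 ≤ 2 * u ^ 2 * u ^ 2 := by
    nlinarith [nuclearNorm_slowCurve_le hu₀.le hu, pow_pos hu₀ 3, pow_pos hu₀ 4]
  have hκ_le : κ ≤ 2 * u ^ 2 := le_of_mul_le_mul_right hκu (by positivity)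
  nlinarith
end
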